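/- If p = 2, e ≥ 2, and m = 1, then the linearized Wenger graph L_1(q) with q = 2^e contains a cycle of length 6. -/

import Mathlib

/-- In the linearized Wenger graph, point `P` is adjacent to line `L` iff
`l_k + p_k = p_1^{p^{k-2}} l_1` for `2 ≤ k ≤ m+1`. -/
def lwAdj (p : ℕ) {F : Type} [Field F] {m : ℕ} (P L : Fin (m + 1) → F) : Prop :=
  ∀ k : Fin m, L k.succ + P k.succ = P 0 ^ p ^ (k : ℕ) * L 0

/-- The linearized Wenger graph `L_m(q)` as a bipartite graph on points ⊕ lines. -/
def lwGraph (p : ℕ) (F : Type) [Field F] (m : ℕ) :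
    SimpleGraph ((Fin (m + 1) → F) ⊕ (Fin (m + 1) → F)) :=
  SimpleGraph.fromRel fun v w => match v, w with
    | Sum.inl P, Sum.inr L => lwAdj p P L
    | _, _ => False

/-!
For `m = 1` the defining relation is `l₂ + p₂ = p₁ l₁` whatever `p` is. Over any field, an
element `α ∉ {0, -1}` gives the hexagon with points `(0,0)`, `(α², 0)`, `(β, β)` and lines
`[0,0]`, `[α⁻¹β, αβ]`, `[1,0]`, where `β = α² + α` (so `α⁻¹β = α + 1`); each of the six
incidences is a polynomial identity in `α`, and `α ≠ 0, -1` keeps the vertices distinct.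
In `GaloisField 2 e` with `e ≥ 2` there are `2^e ≥ 4` elements, so such an `α` exists.
-/

theorem exists_ne_ne_of_two_lt_natCard {α : Type*} (h : 2 < Nat.card α) (a b : α) :
    ∃ x, x ≠ a ∧ x ≠ b := by
  by_contra! hab
  have hsub : (Set.univ : Set α) ⊆ {a, b} := fun x _ => by
    by_cases hx : x = a
    · simp [hx]
    · simp [hab x hx]
  have hle := Set.ncard_le_ncard hsub (Set.toFinite _)
  rw [Set.ncard_univ] at hle
  have := Set.ncard_insert_le a {b}
  rw [Set.ncard_singleton] at this
  omega

theorem SimpleGraph.exists_isCycle_length_six_of_hexagon {α β : Type*}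
    (G : SimpleGraph (α ⊕ β)) {p₁ p₂ p₃ : α} {l₁ l₂ l₃ : β}
    (hp₁₂ : p₁ ≠ p₂) (hp₁₃ : p₁ ≠ p₃) (hp₂₃ : p₂ ≠ p₃)
    (hl₁₂ : l₁ ≠ l₂) (hl₁₃ : l₁ ≠ l₃) (hl₂₃ : l₂ ≠ l₃)
    (h₁₁ : G.Adj (.inl p₁) (.inr l₁)) (h₂₁ : G.Adj (.inl p₂) (.inr l₁))
    (h₂₂ : G.Adj (.inl p₂) (.inr l₂)) (h₃₂ : G.Adj (.inl p₃) (.inr l₂))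
    (h₃₃ : G.Adj (.inl p₃) (.inr l₃)) (h₁₃ : G.Adj (.inl p₁) (.inr l₃)) :
    ∃ (v : α ⊕ β) (c : G.Walk v v), c.IsCycle ∧ c.length = 6 := by
  refine ⟨.inl p₁, .cons h₁₁ (.cons h₂₁.symm (.cons h₂₂ (.cons h₃₂.symm
    (.cons h₃₃ (.cons h₁₃.symm .nil))))), ?_, rfl⟩
  simp [SimpleGraph.Walk.isCycle_def, SimpleGraph.Walk.isTrail_def, hp₁₂, hp₁₃, hp₂₃,
    hl₁₂, hl₁₃, hl₂₃, hp₁₂.symm, hp₁₃.symm]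

theorem lwGraph_one_adj_iff (p : ℕ) {F : Type} [Field F] (P L : Fin 2 → F) :
    (lwGraph p F 1).Adj (.inl P) (.inr L) ↔ L 1 + P 1 = P 0 * L 0 := by
  simp only [lwGraph, SimpleGraph.fromRel_adj]
  constructor
  · rintro ⟨-, h | h⟩
    · simpa using h 0
    · exact h.elim
  · intro h
    refine ⟨by simp, Or.inl fun k => ?_⟩
    fin_cases k
    simpa using h

theorem lwGraph_one_exists_isCycle_length_six (p : ℕ) {F : Type} [Field F] {α : F}
    (hα₀ : α ≠ 0) (hα₁ : α ≠ -1) :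
    ∃ (v : (Fin 2 → F) ⊕ (Fin 2 → F)) (c : (lwGraph p F 1).Walk v v),
      c.IsCycle ∧ c.length = 6 := by
  have hα_add_one : α + 1 ≠ 0 := fun h => hα₁ (eq_neg_of_add_eq_zero_left h)
  have hβ : α ^ 2 + α ≠ 0 := by
    rw [show α ^ 2 + α = α * (α + 1) by ring]
    exact mul_ne_zero hα₀ hα_add_one
  have hαβ : α ^ 3 + α ^ 2 ≠ 0 := by
    rw [show α ^ 3 + α ^ 2 = α * (α ^ 2 + α) by ring]
    exact mul_ne_zero hα₀ hβ
  have adj (P L : Fin 2 → F) (h : L 1 + P 1 = P 0 * L 0) :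
      (lwGraph p F 1).Adj (.inl P) (.inr L) :=
    (lwGraph_one_adj_iff p P L).2 h
  refine (lwGraph p F 1).exists_isCycle_length_six_of_hexagon
    (p₁ := ![0, 0]) (p₂ := ![α ^ 2, 0]) (p₃ := ![α ^ 2 + α, α ^ 2 + α])
    (l₁ := ![0, 0]) (l₂ := ![α + 1, α ^ 3 + α ^ 2]) (l₃ := ![1, 0])
    (fun h => pow_ne_zero 2 hα₀ (by simpa using (congrFun h 0).symm))
    (fun h => hβ (by simpa using (congrFun h 0).symm))
    (fun h => hβ (by simpa using (congrFun h 1).symm))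
    (fun h => hαβ (by simpa using (congrFun h 1).symm))
    (fun h => zero_ne_one (α := F) (by simpa using congrFun h 0))
    (fun h => hαβ (by simpa using congrFun h 1))
    (adj _ _ ?_) (adj _ _ ?_) (adj _ _ ?_) (adj _ _ ?_) (adj _ _ ?_) (adj _ _ ?_) <;>
  simp only [Matrix.cons_val_zero, Matrix.cons_val_one] <;> ring

/-- For `p = 2`, `e ≥ 2`, `m = 1`, the linearized Wenger graph `L_1(2^e)` contains a
cycle of length `6`. -/
theorem stmt14 (e : ℕ) (he : 2 ≤ e) :
    ∃ (v : (Fin 2 → GaloisField 2 e) ⊕ (Fin 2 → GaloisField 2 e))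
      (c : (lwGraph 2 (GaloisField 2 e) 1).Walk v v), c.IsCycle ∧ c.length = 6 := by
  have hcard : 2 < Nat.card (GaloisField 2 e) := by
    rw [GaloisField.card 2 e (by omega)]
    calc 2 < 2 ^ 2 := by norm_num
      _ ≤ 2 ^ e := Nat.pow_le_pow_right two_pos he
  obtain ⟨α, hα₀, hα₁⟩ := exists_ne_ne_of_two_lt_natCard hcard 0 (-1)
  exact lwGraph_one_exists_isCycle_length_six 2 hα₀ hα₁
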